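/- Substitution system for λ-calculus with explicit flattening on the flattening-free terms: let (Lam, α, ⦃−⦄) be the initial substitution system for the λ-calculus signature LC = App + Abs, and let μ^Lam := ⦃id_{(Lam,η)}⦄ : Lam·Lam → Lam. Then (Lam, [α, μ^Lam]) is an (Id + LCμ)-algebra for the extended signature LCμ = LC + Flat, and defining ⦃f⦄^Flat := ⦃f⦄ for each pointed f : (Z,e) → (Lam,η) yields a bracket operation on this algebra, so (Lam, [α, μ^Lam], ⦃−⦄^Flat) is a heterogeneous substitution system for LCμ. The only non-trivial verification is ⦃f⦄^Flat ∘ (μ^Lam·Z) = μ^Lam ∘ Lam(⦃f⦄^Flat) ∘ (⦃f⦄^Flat·Lam·Z) ∘ (Lam·e·Lam·Z). -/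

import Mathlib

open CategoryTheory Limits

universe v u

/-- A pointed endofunctor on `C`. -/
structure Ptd (C : Type u) [Category.{v} C] where
  Z : C ⥤ C
  e : 𝟭 C ⟶ Z

/-- The data of a signature over `C`: an endofunctor `H` on `[C,C]` together with a
strength `θ : (H −)·U∼ ⟶ H (−·U∼)` (here `X·Z` is the composite `Z ⋙ X`). -/
structure SigData (C : Type u) [Category.{v} C] where
  H : (C ⥤ C) ⥤ (C ⥤ C)
  θ : ∀ (X : C ⥤ C) (Z : Ptd C), (Z.Z ⋙ H.obj X) ⟶ H.obj (Z.Z ⋙ X)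

variable {C : Type u} [Category.{v} C]

/-- A heterogeneous substitution system for the signature data `(H, θ)`. -/
structure HSS (S : SigData C) where
  T : C ⥤ C
  η : 𝟭 C ⟶ T
  τ : S.H.obj T ⟶ T
  bracket : ∀ (Z : Ptd C) (f : Z.Z ⟶ T), Z.e ≫ f = η → (Z.Z ⋙ T ⟶ T)
  bracket_η : ∀ (Z : Ptd C) (f : Z.Z ⟶ T) (hf : Z.e ≫ f = η),
      Functor.whiskerLeft Z.Z η ≫ bracket Z f hf = f
  bracket_τ : ∀ (Z : Ptd C) (f : Z.Z ⟶ T) (hf : Z.e ≫ f = η),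
      Functor.whiskerLeft Z.Z τ ≫ bracket Z f hf = S.θ T Z ≫ S.H.map (bracket Z f hf) ≫ τ
  bracket_unique : ∀ (Z : Ptd C) (f : Z.Z ⟶ T) (hf : Z.e ≫ f = η)
      (h : Z.Z ⋙ T ⟶ T),
      Functor.whiskerLeft Z.Z η ≫ h = f →
      Functor.whiskerLeft Z.Z τ ≫ h = S.θ T Z ≫ S.H.map h ≫ τ →
      h = bracket Z f hf

section Signatures

variable (C)
variable [Limits.HasBinaryProducts C] [Limits.HasBinaryCoproducts C]
  [Limits.HasTerminal C]

/-- The application signature `H^App (T) = T × T`, with strength given pointwise by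
the identity. -/
noncomputable def appSig : SigData C where
  H := { obj := fun X => Limits.prod X X
         map := fun f => Limits.prod.map f f
         map_id := by intros; simp
         map_comp := by intros; simp }
  θ := fun X Z => Limits.prod.lift (Functor.whiskerLeft Z.Z Limits.prod.fst)
        (Functor.whiskerLeft Z.Z Limits.prod.snd)

/-- The `option` functor `A ↦ 1 + A`. -/
noncomputable def optionF : C ⥤ C where
  obj A := Limits.coprod (⊤_ C) A
  map f := Limits.coprod.map (𝟙 (⊤_ C)) f
  map_id := by intros; simp
  map_comp := by intros; simp

/-- The abstraction signature `H^Abs (T) = T·option`, with strength whose component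
at `A` is `X [e_{1+A} ∘ inl, Z(inr)]`. -/
noncomputable def absSig : SigData C where
  H := { obj := fun T => optionF C ⋙ T
         map := fun f => Functor.whiskerLeft (optionF C) f
         map_id := by intros; simp
         map_comp := by intros; simp }
  θ := fun X Z =>
    { app := fun A => X.map (Limits.coprod.desc
        (Limits.coprod.inl ≫ Z.e.app ((optionF C).obj A))
        (Z.Z.map Limits.coprod.inr))
      naturality := by
        intro A B f
        show X.map _ ≫ X.map _ = X.map _ ≫ X.map _
        refine (X.map_comp _ _).symm.trans ((congrArg X.map ?_).trans (X.map_comp _ _))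
        apply Limits.coprod.hom_ext
        · simp [optionF, ← NatTrans.naturality]
          erw [Limits.coprod.inl_desc, Limits.coprod.inl_desc]
        · simp only [optionF]
          rw [Limits.coprod.inr_map_assoc, Limits.coprod.inr_desc,
            Limits.coprod.inr_desc_assoc, ← Z.Z.map_comp, ← Z.Z.map_comp,
            Limits.coprod.inr_map] }

/-- The explicit-flattening signature `H^Flat (T) = T·T`, with strength
`θ^Flat_{X,(Z,e)} = X·e·X·Z`. -/
def flatSig : SigData C where
  H := { obj := fun X => X ⋙ X
         map := fun f => NatTrans.hcomp f f
         map_id := by intros; ext; simp [NatTrans.hcomp]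
         map_comp := by intros; ext; simp [NatTrans.hcomp] }
  θ := fun X Z => Functor.whiskerLeft (Z.Z ⋙ X) (Functor.whiskerRight Z.e X)

variable {C}

/-- The sum of two signatures (pointwise coproduct of the functors, coproduct of the
strengths modulo the canonical isomorphism `(H X + H' X)·Z ≅ (H X)·Z + (H' X)·Z`). -/
noncomputable def SigData.sum (S S' : SigData C) : SigData C where
  H := { obj := fun X => Limits.coprod (S.H.obj X) (S'.H.obj X)
         map := fun f => Limits.coprod.map (S.H.map f) (S'.H.map f)
         map_id := by intros; simp
         map_comp := by intros; simp }
  θ := fun X Z =>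
    (Limits.PreservesColimitPair.iso ((Functor.whiskeringLeft C C C).obj Z.Z)
        (S.H.obj X) (S'.H.obj X)).inv ≫
      Limits.coprod.map (S.θ X Z) (S'.θ X Z)

/-- The signature `LC` of the λ-calculus: application plus abstraction. -/
noncomputable def LC : SigData C := (appSig C).sum (absSig C)

/-- The signature `LCμ` of the λ-calculus with explicit flattening. -/
noncomputable def LCμ : SigData C := (LC (C := C)).sum (flatSig C)

end Signatures

/-!
The `App` and `Abs` clauses of the bracket equation for `LCμ` are those for `LC`, and a solution
for `LCμ` is in particular one for `LC`, which gives uniqueness; only the `Flat` clause needs an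
argument. The strength laws of `LC` make brackets natural in the pointed argument,
`⦃g⦄ ∘ Lam·h = ⦃g ∘ h⦄`, and composable, `⦃f⦄ ∘ ⦃g⦄·Z = ⦃⦃f⦄ ∘ g·Z⦄`. Hence `⦃f⦄ ∘ μ·Z` and
`μ ∘ Lam·⦃f⦄` are both the bracket of `⦃f⦄` at `(Lam·Z, η·Z ∘ e)`, and
`⦃f⦄ ∘ Lam·e = ⦃f ∘ e⦄ = ⦃η⦄ = id` collapses the strength of `Flat` on the right-hand side to
`μ ∘ Lam·⦃f⦄`.
-/

open Functor

theorem Functor.whiskerLeft_comp_eq_whiskerLeft_whiskerLeft {B D E : Type*} [Category B]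
    [Category D] [Category E] (F : B ⥤ C) (G : C ⥤ D) {H K : D ⥤ E} (α : H ⟶ K) :
    whiskerLeft (F ⋙ G) α = whiskerLeft F (whiskerLeft G α) := rfl

namespace Ptd

abbrev id (C : Type u) [Category.{v} C] : Ptd C := ⟨𝟭 C, 𝟙 (𝟭 C)⟩

abbrev comp (Z W : Ptd C) : Ptd C := ⟨Z.Z ⋙ W.Z, Z.e ≫ whiskerLeft Z.Z W.e⟩

end Ptd

namespace SigData

structure StrengthLaws (S : SigData C) : Prop where
  naturality_fun : ∀ {F G : C ⥤ C} (m : F ⟶ G) (W : Ptd C),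
    whiskerLeft W.Z (S.H.map m) ≫ S.θ G W = S.θ F W ≫ S.H.map (whiskerLeft W.Z m)
  naturality_ptd : ∀ (X : C ⥤ C) {W₁ W₂ : Ptd C} (g : W₁.Z ⟶ W₂.Z), W₁.e ≫ g = W₂.e →
    whiskerRight g (S.H.obj X) ≫ S.θ X W₂ = S.θ X W₁ ≫ S.H.map (whiskerRight g X)
  θ_id : ∀ X : C ⥤ C, S.θ X (Ptd.id C) = 𝟙 (S.H.obj X)
  θ_comp : ∀ (X : C ⥤ C) (Z W : Ptd C),
    whiskerLeft Z.Z (S.θ X W) ≫ S.θ (W.Z ⋙ X) Z = S.θ X (Z.comp W)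

section Sum

variable [HasBinaryCoproducts C] (S S' : SigData C)

-- Stated with target `(S.sum S').H.obj X` rather than the coproduct it unfolds to, so that
-- rewriting next to `(S.sum S').θ` needs no unfolding of `SigData.sum`.
noncomputable def sumInl (X : C ⥤ C) : S.H.obj X ⟶ (S.sum S').H.obj X := coprod.inl

noncomputable def sumInr (X : C ⥤ C) : S'.H.obj X ⟶ (S.sum S').H.obj X := coprod.inr

variable {S S'}

theorem sumInl_comp_H_map {F G : C ⥤ C} (m : F ⟶ G) :
    S.sumInl S' F ≫ (S.sum S').H.map m = S.H.map m ≫ S.sumInl S' G := coprod.inl_map _ _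

theorem sumInr_comp_H_map {F G : C ⥤ C} (m : F ⟶ G) :
    S.sumInr S' F ≫ (S.sum S').H.map m = S'.H.map m ≫ S.sumInr S' G := coprod.inr_map _ _

theorem whiskerLeft_sumInl_comp_θ (X : C ⥤ C) (W : Ptd C) :
    whiskerLeft W.Z (S.sumInl S' X) ≫ (S.sum S').θ X W = S.θ X W ≫ S.sumInl S' _ := by
  have h : whiskerLeft W.Z (S.sumInl S' X) = coprod.inl ≫
      (PreservesColimitPair.iso ((whiskeringLeft C C C).obj W.Z) (S.H.obj X) (S'.H.obj X)).hom := by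
    rw [PreservesColimitPair.iso_hom, coprodComparison_inl]; rfl
  dsimp only [SigData.sum, sumInl] at h ⊢
  rw [h, Category.assoc, Iso.hom_inv_id_assoc, coprod.inl_map]

theorem whiskerLeft_sumInr_comp_θ (X : C ⥤ C) (W : Ptd C) :
    whiskerLeft W.Z (S.sumInr S' X) ≫ (S.sum S').θ X W = S'.θ X W ≫ S.sumInr S' _ := by
  have h : whiskerLeft W.Z (S.sumInr S' X) = coprod.inr ≫
      (PreservesColimitPair.iso ((whiskeringLeft C C C).obj W.Z) (S.H.obj X) (S'.H.obj X)).hom := by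
    rw [PreservesColimitPair.iso_hom, coprodComparison_inr]; rfl
  dsimp only [SigData.sum, sumInr] at h ⊢
  rw [h, Category.assoc, Iso.hom_inv_id_assoc, coprod.inr_map]

theorem whiskerLeft_sum_hom_ext {W X Y : C ⥤ C} {a b : W ⋙ (S.sum S').H.obj X ⟶ Y}
    (hl : whiskerLeft W (S.sumInl S' X) ≫ a = whiskerLeft W (S.sumInl S' X) ≫ b)
    (hr : whiskerLeft W (S.sumInr S' X) ≫ a = whiskerLeft W (S.sumInr S' X) ≫ b) : a = b := by
  let e := PreservesColimitPair.iso ((whiskeringLeft C C C).obj W) (S.H.obj X) (S'.H.obj X)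
  have hinl : coprod.inl ≫ e.hom = whiskerLeft W (S.sumInl S' X) :=
    (congrArg _ (PreservesColimitPair.iso_hom _ _ _)).trans (coprodComparison_inl _)
  have hinr : coprod.inr ≫ e.hom = whiskerLeft W (S.sumInr S' X) :=
    (congrArg _ (PreservesColimitPair.iso_hom _ _ _)).trans (coprodComparison_inr _)
  refine (cancel_epi e.hom).1 (coprod.hom_ext ?_ ?_)
  · exact ((Category.assoc _ _ _).symm.trans (hinl =≫ a)).trans
      (hl.trans ((Category.assoc _ _ _).symm.trans (hinl =≫ b)).symm)
  · exact ((Category.assoc _ _ _).symm.trans (hinr =≫ a)).trans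
      (hr.trans ((Category.assoc _ _ _).symm.trans (hinr =≫ b)).symm)

theorem whiskerLeft_comp_eq_θ_comp_sum_iff {X : C ⥤ C} (Z : Ptd C) (t : (S.sum S').H.obj X ⟶ X)
    (h : Z.Z ⋙ X ⟶ X) :
    whiskerLeft Z.Z t ≫ h = (S.sum S').θ X Z ≫ (S.sum S').H.map h ≫ t ↔
      whiskerLeft Z.Z (S.sumInl S' X ≫ t) ≫ h =
          S.θ X Z ≫ S.H.map h ≫ S.sumInl S' X ≫ t ∧
        whiskerLeft Z.Z (S.sumInr S' X ≫ t) ≫ h =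
          S'.θ X Z ≫ S'.H.map h ≫ S.sumInr S' X ≫ t := by
  have hl : whiskerLeft Z.Z (S.sumInl S' X) ≫ (S.sum S').θ X Z ≫ (S.sum S').H.map h ≫ t =
      S.θ X Z ≫ S.H.map h ≫ S.sumInl S' X ≫ t := by
    simp [reassoc_of% whiskerLeft_sumInl_comp_θ, reassoc_of% sumInl_comp_H_map]
  have hr : whiskerLeft Z.Z (S.sumInr S' X) ≫ (S.sum S').θ X Z ≫ (S.sum S').H.map h ≫ t =
      S'.θ X Z ≫ S'.H.map h ≫ S.sumInr S' X ≫ t := by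
    simp [reassoc_of% whiskerLeft_sumInr_comp_θ, reassoc_of% sumInr_comp_H_map]
  simp only [whiskerLeft_comp, Category.assoc, ← hl, ← hr]
  exact ⟨fun hsum => ⟨_ ≫= hsum, _ ≫= hsum⟩, fun ⟨hl, hr⟩ => whiskerLeft_sum_hom_ext hl hr⟩

theorem StrengthLaws.sum (hS : S.StrengthLaws) (hS' : S'.StrengthLaws) :
    (S.sum S').StrengthLaws where
  naturality_fun m W := by
    apply whiskerLeft_sum_hom_ext
    · simp only [← whiskerLeft_comp_assoc, sumInl_comp_H_map]
      simp [whiskerLeft_sumInl_comp_θ, reassoc_of% whiskerLeft_sumInl_comp_θ,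
        reassoc_of% hS.naturality_fun m W, sumInl_comp_H_map]
    · simp only [← whiskerLeft_comp_assoc, sumInr_comp_H_map]
      simp [whiskerLeft_sumInr_comp_θ, reassoc_of% whiskerLeft_sumInr_comp_θ,
        reassoc_of% hS'.naturality_fun m W, sumInr_comp_H_map]
  naturality_ptd X W₁ W₂ g hg := by
    apply whiskerLeft_sum_hom_ext
    · rw [whiskerLeft_comp_whiskerRight_assoc g (S.sumInl S' X)]
      simp [whiskerLeft_sumInl_comp_θ, reassoc_of% whiskerLeft_sumInl_comp_θ,
        reassoc_of% hS.naturality_ptd X g hg, sumInl_comp_H_map]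
    · rw [whiskerLeft_comp_whiskerRight_assoc g (S.sumInr S' X)]
      simp [whiskerLeft_sumInr_comp_θ, reassoc_of% whiskerLeft_sumInr_comp_θ,
        reassoc_of% hS'.naturality_ptd X g hg, sumInr_comp_H_map]
  θ_id X := by
    apply whiskerLeft_sum_hom_ext
    · erw [whiskerLeft_sumInl_comp_θ (W := Ptd.id C), hS.θ_id, Category.id_comp,
        Category.comp_id]
      rfl
    · erw [whiskerLeft_sumInr_comp_θ (W := Ptd.id C), hS'.θ_id, Category.id_comp,
        Category.comp_id]
      rfl
  θ_comp X Z W := by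
    refine whiskerLeft_sum_hom_ext (W := Z.Z ⋙ W.Z) (X := X) ?_ ?_
    · rw [whiskerLeft_comp_eq_whiskerLeft_whiskerLeft, ← whiskerLeft_comp_assoc,
        whiskerLeft_sumInl_comp_θ, whiskerLeft_comp_assoc, whiskerLeft_sumInl_comp_θ,
        ← Category.assoc, hS.θ_comp]
      exact (whiskerLeft_sumInl_comp_θ X (Z.comp W)).symm
    · rw [whiskerLeft_comp_eq_whiskerLeft_whiskerLeft, ← whiskerLeft_comp_assoc,
        whiskerLeft_sumInr_comp_θ, whiskerLeft_comp_assoc, whiskerLeft_sumInr_comp_θ,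
        ← Category.assoc, hS'.θ_comp]
      exact (whiskerLeft_sumInr_comp_θ X (Z.comp W)).symm

end Sum

end SigData

theorem appSig_strengthLaws [HasBinaryProducts C] : (appSig C).StrengthLaws where
  naturality_fun m W := by
    apply prod.hom_ext <;> simp [appSig, ← whiskerLeft_comp]
  naturality_ptd X W₁ W₂ g _ := by
    apply prod.hom_ext <;> simp [appSig, whiskerLeft_comp_whiskerRight]
  θ_id X := by
    apply prod.hom_ext
    · exact (prod.lift_fst _ _).trans (Category.id_comp _).symm
    · exact (prod.lift_snd _ _).trans (Category.id_comp _).symm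
  θ_comp X Z W := by
    dsimp only [appSig]
    apply prod.hom_ext
    · rw [Category.assoc, prod.lift_fst, ← whiskerLeft_comp, prod.lift_fst]
      exact (prod.lift_fst _ _).symm
    · rw [Category.assoc, prod.lift_snd, ← whiskerLeft_comp, prod.lift_snd]
      exact (prod.lift_snd _ _).symm

theorem absSig_strengthLaws [HasBinaryCoproducts C] [HasTerminal C] :
    (absSig C).StrengthLaws where
  naturality_fun m W := by
    ext A
    exact (m.naturality _).symm
  naturality_ptd X W₁ W₂ g hg := by
    ext A
    dsimp only [absSig, whiskerLeft_app, whiskerRight_app, NatTrans.comp_app,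
      Functor.comp_map]
    refine (X.map_comp _ _).symm.trans ((congrArg X.map ?_).trans (X.map_comp _ _))
    apply coprod.hom_ext
    · erw [coprod.inl_map_assoc, Category.id_comp, coprod.inl_desc,
        coprod.inl_desc_assoc, Category.assoc, ← NatTrans.comp_app, hg]
    · erw [coprod.inr_map_assoc, coprod.inr_desc, coprod.inr_desc_assoc]
      exact (g.naturality _).symm
  θ_id X := by
    ext A
    refine (congrArg X.map (coprod.hom_ext ?_ ?_)).trans (X.map_id _)
    · exact (coprod.inl_desc _ _).trans ((Category.comp_id _).trans (Category.comp_id _).symm)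
    · exact (coprod.inr_desc _ _).trans (Category.comp_id _).symm
  θ_comp X Z W := by
    ext A
    dsimp only [absSig, whiskerLeft_app, NatTrans.comp_app, Functor.comp_map]
    refine (X.map_comp _ _).symm.trans (congrArg X.map ?_)
    apply coprod.hom_ext
    · erw [coprod.inl_desc_assoc, Category.assoc, ← W.e.naturality, Functor.id_map,
        coprod.inl_desc_assoc, coprod.inl_desc, Category.assoc]
      rfl
    · erw [coprod.inr_desc_assoc, ← W.Z.map_comp, coprod.inr_desc, coprod.inr_desc]
      rfl

theorem LC_strengthLaws [HasBinaryProducts C] [HasBinaryCoproducts C] [HasTerminal C] :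
    (LC (C := C)).StrengthLaws :=
  appSig_strengthLaws.sum absSig_strengthLaws

namespace HSS

variable {S : SigData C} (B : HSS S)

abbrev ptd : Ptd C := ⟨B.T, B.η⟩

def μ : B.T ⋙ B.T ⟶ B.T := B.bracket B.ptd (𝟙 B.T) (Category.comp_id B.η)

theorem bracket_congr {Z : Ptd C} {f f' : Z.Z ⟶ B.T} (hf : Z.e ≫ f = B.η)
    (hf' : Z.e ≫ f' = B.η) (h : f = f') : B.bracket Z f hf = B.bracket Z f' hf' := by
  subst h; rfl

variable {B}

theorem bracket_id_η (hS : S.StrengthLaws) :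
    B.bracket (Ptd.id C) B.η (Category.id_comp B.η) = 𝟙 B.T := by
  refine (B.bracket_unique (Ptd.id C) _ _ (𝟙 B.T) (Category.comp_id _) ?_).symm
  rw [hS.θ_id]
  show B.τ ≫ 𝟙 B.T = 𝟙 (S.H.obj B.T) ≫ S.H.map (𝟙 B.T) ≫ B.τ
  simp

theorem whiskerRight_comp_bracket (hS : S.StrengthLaws) {Z W : Ptd C} (h : Z.Z ⟶ W.Z)
    (hh : Z.e ≫ h = W.e) (g : W.Z ⟶ B.T) (hg : W.e ≫ g = B.η) :
    whiskerRight h B.T ≫ B.bracket W g hg =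
      B.bracket Z (h ≫ g) (by rw [← Category.assoc, hh, hg]) := by
  apply B.bracket_unique
  · rw [← Category.assoc, whiskerLeft_comp_whiskerRight, Category.assoc, B.bracket_η]
    rfl
  · rw [← Category.assoc, whiskerLeft_comp_whiskerRight, Category.assoc, B.bracket_τ,
      ← Category.assoc, hS.naturality_ptd B.T h hh, Category.assoc, ← S.H.map_comp_assoc]

theorem whiskerRight_e_comp_bracket (hS : S.StrengthLaws) {Z : Ptd C} (f : Z.Z ⟶ B.T)
    (hf : Z.e ≫ f = B.η) : whiskerRight Z.e B.T ≫ B.bracket Z f hf = 𝟙 B.T := by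
  rw [whiskerRight_comp_bracket hS (Z := Ptd.id C) Z.e (Category.id_comp _),
    B.bracket_congr _ (Category.id_comp B.η) hf, bracket_id_η hS]

theorem whiskerLeft_bracket_comp_bracket (hS : S.StrengthLaws) {Z W : Ptd C}
    (f : Z.Z ⟶ B.T) (hf : Z.e ≫ f = B.η) (g : W.Z ⟶ B.T) (hg : W.e ≫ g = B.η) :
    whiskerLeft Z.Z (B.bracket W g hg) ≫ B.bracket Z f hf =
      B.bracket (Z.comp W) (whiskerLeft Z.Z g ≫ B.bracket Z f hf) (by
        rw [Category.assoc, ← whiskerLeft_comp_assoc, hg, B.bracket_η, hf]) := by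
  refine B.bracket_unique (Z.comp W) _ _ _ ?_ ?_
  · rw [whiskerLeft_comp_eq_whiskerLeft_whiskerLeft, ← whiskerLeft_comp_assoc, B.bracket_η]
  · rw [whiskerLeft_comp_eq_whiskerLeft_whiskerLeft, ← whiskerLeft_comp_assoc, B.bracket_τ,
      whiskerLeft_comp, whiskerLeft_comp, Category.assoc, Category.assoc, B.bracket_τ,
      reassoc_of% hS.naturality_fun, ← reassoc_of% hS.θ_comp, S.H.map_comp_assoc]

theorem whiskerLeft_μ_comp_bracket (hS : S.StrengthLaws) {Z : Ptd C} (f : Z.Z ⟶ B.T)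
    (hf : Z.e ≫ f = B.η) :
    whiskerLeft Z.Z B.μ ≫ B.bracket Z f hf = whiskerRight (B.bracket Z f hf) B.T ≫ B.μ := by
  have hpt : (Z.comp B.ptd).e ≫ B.bracket Z f hf = B.η := by
    rw [Category.assoc, B.bracket_η, hf]
  rw [μ, whiskerLeft_bracket_comp_bracket hS,
    whiskerRight_comp_bracket hS (Z := Z.comp B.ptd) (W := B.ptd) _ hpt]
  exact B.bracket_congr _ _ (by simp)

end HSS

theorem flatSig_θ_comp_hcomp {X : C ⥤ C} {Z : Ptd C} (h : Z.Z ⋙ X ⟶ X)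
    (he : whiskerRight Z.e X ≫ h = 𝟙 X) :
    (flatSig C).θ X Z ≫ NatTrans.hcomp h h = whiskerRight h X := by
  ext A
  have heA := NatTrans.congr_app he ((Z.Z ⋙ X).obj A)
  simp only [NatTrans.comp_app, whiskerRight_app, NatTrans.id_app] at heA
  simp [flatSig, NatTrans.hcomp, reassoc_of% heA]

variable [Limits.HasBinaryProducts C] [Limits.HasBinaryCoproducts C]
  [Limits.HasTerminal C]

theorem lam_flatten_hss_general (Lam : HSS (LC (C := C)))
    (μLam : Lam.T ⋙ Lam.T ⟶ Lam.T)
    (hμ : μLam = Lam.bracket ⟨Lam.T, Lam.η⟩ (𝟙 Lam.T) (Category.comp_id Lam.η))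
    (τμ : (LCμ (C := C)).H.obj Lam.T ⟶ Lam.T)
    (hτμ : τμ = Limits.coprod.desc Lam.τ μLam) :
    ∀ (Z : Ptd C) (f : Z.Z ⟶ Lam.T) (hf : Z.e ≫ f = Lam.η),
      -- `⦃f⦄` is a bracket for the extended algebra `(Lam, [α, μ^Lam])` …
      (Functor.whiskerLeft Z.Z Lam.η ≫ Lam.bracket Z f hf = f) ∧
      (Functor.whiskerLeft Z.Z τμ ≫ Lam.bracket Z f hf =
        (LCμ (C := C)).θ Lam.T Z ≫
          (LCμ (C := C)).H.map (Lam.bracket Z f hf) ≫ τμ) ∧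
      -- … it is the unique such morphism …
      (∀ h : Z.Z ⋙ Lam.T ⟶ Lam.T,
        Functor.whiskerLeft Z.Z Lam.η ≫ h = f →
        Functor.whiskerLeft Z.Z τμ ≫ h =
          (LCμ (C := C)).θ Lam.T Z ≫ (LCμ (C := C)).H.map h ≫ τμ →
        h = Lam.bracket Z f hf) ∧
      -- … and the non-trivial verification: compatibility with `μ^Lam`.
      (Functor.whiskerLeft Z.Z μLam ≫ Lam.bracket Z f hf =
        (flatSig C).θ Lam.T Z ≫
          NatTrans.hcomp (Lam.bracket Z f hf) (Lam.bracket Z f hf) ≫ μLam) := by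
  intro Z f hf
  have hμ : μLam = Lam.μ := hμ
  subst hμ
  have hflat : whiskerLeft Z.Z Lam.μ ≫ Lam.bracket Z f hf =
      (flatSig C).θ Lam.T Z ≫
        NatTrans.hcomp (Lam.bracket Z f hf) (Lam.bracket Z f hf) ≫ Lam.μ := by
    have hcomp := flatSig_θ_comp_hcomp _ (HSS.whiskerRight_e_comp_bracket LC_strengthLaws f hf)
    exact (HSS.whiskerLeft_μ_comp_bracket LC_strengthLaws f hf).trans
      ((hcomp =≫ Lam.μ).symm.trans (Category.assoc _ _ _))
  have hinl : LC.sumInl (flatSig C) Lam.T ≫ τμ = Lam.τ := by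
    subst hτμ; exact coprod.inl_desc _ _
  have hinr : LC.sumInr (flatSig C) Lam.T ≫ τμ = Lam.μ := by
    subst hτμ; exact coprod.inr_desc _ _
  have hsum (h : Z.Z ⋙ Lam.T ⟶ Lam.T) := SigData.whiskerLeft_comp_eq_θ_comp_sum_iff Z τμ h
  simp only [hinl, hinr] at hsum
  exact ⟨Lam.bracket_η Z f hf, (hsum _).2 ⟨Lam.bracket_τ Z f hf, hflat⟩,
    fun h hη hτ => Lam.bracket_unique Z f hf h hη ((hsum h).1 hτ).1, hflat⟩

/-- **Substitution system for λ-calculus with explicit flattening on the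
flattening-free terms** (Matthes–Uustalu, extended): let `(Lam, α, ⦃−⦄)` be the
initial substitution system for the λ-calculus signature `LC = App + Abs`, and let
`μ^Lam := ⦃id_{(Lam,η)}⦄ : Lam·Lam ⟶ Lam`.  Then `(Lam, [α, μ^Lam])` is an
`(Id + LCμ)`-algebra for the extended signature `LCμ = LC + Flat`, and defining
`⦃f⦄^Flat := ⦃f⦄` for each pointed `f : (Z,e) ⟶ (Lam,η)` yields a bracket
operation on this algebra, so `(Lam, [α, μ^Lam], ⦃−⦄^Flat)` is a heterogeneous
substitution system for `LCμ`.  The only non-trivial verification is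
`⦃f⦄^Flat ∘ (μ^Lam·Z) = μ^Lam ∘ Lam(⦃f⦄^Flat) ∘ (⦃f⦄^Flat·Lam·Z) ∘ (Lam·e·Lam·Z)`
(stated below via the strength of `Flat` and horizontal composition). -/
theorem lam_flatten_hss (Lam : HSS (LC (C := C)))
    -- `Lam` is the *initial* substitution system for `LC`:
    (hinit : ∀ B : HSS (LC (C := C)), ∃! β : Lam.T ⟶ B.T,
      Lam.η ≫ β = B.η ∧
      Lam.τ ≫ β = (LC (C := C)).H.map β ≫ B.τ ∧
      ∀ (Z : Ptd C) (f : Z.Z ⟶ Lam.T) (hf : Z.e ≫ f = Lam.η)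
        (hf' : Z.e ≫ (f ≫ β) = B.η),
        Lam.bracket Z f hf ≫ β = Functor.whiskerLeft Z.Z β ≫ B.bracket Z (f ≫ β) hf')
    (μLam : Lam.T ⋙ Lam.T ⟶ Lam.T)
    (hμ : μLam = Lam.bracket ⟨Lam.T, Lam.η⟩ (𝟙 Lam.T) (Category.comp_id Lam.η))
    (τμ : (LCμ (C := C)).H.obj Lam.T ⟶ Lam.T)
    (hτμ : τμ = Limits.coprod.desc Lam.τ μLam) :
    ∀ (Z : Ptd C) (f : Z.Z ⟶ Lam.T) (hf : Z.e ≫ f = Lam.η),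
      -- `⦃f⦄` is a bracket for the extended algebra `(Lam, [α, μ^Lam])` …
      (Functor.whiskerLeft Z.Z Lam.η ≫ Lam.bracket Z f hf = f) ∧
      (Functor.whiskerLeft Z.Z τμ ≫ Lam.bracket Z f hf =
        (LCμ (C := C)).θ Lam.T Z ≫
          (LCμ (C := C)).H.map (Lam.bracket Z f hf) ≫ τμ) ∧
      -- … it is the unique such morphism …
      (∀ h : Z.Z ⋙ Lam.T ⟶ Lam.T,
        Functor.whiskerLeft Z.Z Lam.η ≫ h = f →
        Functor.whiskerLeft Z.Z τμ ≫ h =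
          (LCμ (C := C)).θ Lam.T Z ≫ (LCμ (C := C)).H.map h ≫ τμ →
        h = Lam.bracket Z f hf) ∧
      -- … and the non-trivial verification: compatibility with `μ^Lam`.
      (Functor.whiskerLeft Z.Z μLam ≫ Lam.bracket Z f hf =
        (flatSig C).θ Lam.T Z ≫
          NatTrans.hcomp (Lam.bracket Z f hf) (Lam.bracket Z f hf) ≫ μLam) :=
  lam_flatten_hss_general Lam μLam hμ τμ hτμ
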